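/- If 0 < d₋ < 1 < d₊ satisfy 1/d₋² + 2d₋ = 1/d₊² + 2d₊ and F = d₋^(−3/2), then d₊³ = (((F + √(F² + 8))/4)³)·F. -/

import Mathlib

/-!
Clearing denominators in `1/d₋² + 2d₋ = 1/d₊² + 2d₊` leaves a factor `d₊ - d₋`, so `d₋ + d₊ = 2 d₋² d₊²`.
With `F = d₋^(-3/2)`, the scaled depth `y = d₊ √d₋` therefore solves `2 y² = F y + 1`, whose positive
root is `(F + √(F² + 8)) / 4`; and `d₊³ = y³ F` because `F (√d₋)³ = 1`.
-/

theorem add_eq_two_mul_sq_mul_sq_of_inv_sq_add_two_mul_eq {a b : ℝ} (ha : a ≠ 0) (hb : b ≠ 0) (hab : a ≠ b)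
    (h : 1 / a ^ 2 + 2 * a = 1 / b ^ 2 + 2 * b) : a + b = 2 * a ^ 2 * b ^ 2 := by
  have hfactor : (b - a) * (a + b - 2 * a ^ 2 * b ^ 2) = 0 := by
    field_simp at h
    linear_combination h
  linear_combination (mul_eq_zero.mp hfactor).resolve_left (sub_ne_zero.mpr hab.symm)

theorem eq_of_two_mul_sq_eq_mul_add_one {F y : ℝ} (hy : 0 < y) (h : 2 * y ^ 2 = F * y + 1) :
    y = (F + √(F ^ 2 + 8)) / 4 := by
  have hdiscrim : discrim 2 (-F) (-1) = √(F ^ 2 + 8) * √(F ^ 2 + 8) := by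
    rw [Real.mul_self_sqrt (by positivity), discrim]
    ring
  have hroots := (quadratic_eq_zero_iff two_ne_zero hdiscrim y).mp (by linear_combination h)
  rcases hroots with hplus | hminus
  · linear_combination hplus
  · have : F < √(F ^ 2 + 8) := Real.lt_sqrt_of_sq_lt (by linarith)
    have : y < 0 := by rw [hminus]; linarith
    linarith

theorem Real.rpow_neg_three_halves_mul_sqrt_pow_three {x : ℝ} (hx : 0 < x) :
    x ^ (-(3 : ℝ) / 2) * √x ^ 3 = 1 := by
  rw [Real.sqrt_eq_rpow, ← Real.rpow_natCast, ← Real.rpow_mul hx.le, ← Real.rpow_add hx]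
  norm_num

/-- If 0 < d₋ < 1 < d₊ are conjugate depths and F = d₋^(−3/2) is the Froude
number, then d₊³ = (((F + √(F² + 8))/4)³)·F. -/
theorem theta_of_froude (dm dp F : ℝ) (h0 : 0 < dm) (h1 : dm < 1) (h2 : 1 < dp)
    (heq : 1 / dm ^ 2 + 2 * dm = 1 / dp ^ 2 + 2 * dp)
    (hF : F = dm ^ (-(3 : ℝ) / 2)) :
    dp ^ 3 = ((F + Real.sqrt (F ^ 2 + 8)) / 4) ^ 3 * F := by
  have hdp : 0 < dp := one_pos.trans h2
  have hconj := add_eq_two_mul_sq_mul_sq_of_inv_sq_add_two_mul_eq h0.ne' hdp.ne' (h1.trans h2).ne heq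
  have hFt : F * √dm ^ 3 = 1 := hF ▸ Real.rpow_neg_three_halves_mul_sqrt_pow_three h0
  have ht2 : √dm ^ 2 = dm := Real.sq_sqrt h0.le
  have ht : 0 < √dm := Real.sqrt_pos.mpr h0
  have hquad : 2 * (dp * √dm) ^ 2 = F * (dp * √dm) + 1 := by
    refine mul_left_cancel₀ (pow_ne_zero 3 ht.ne') ?_
    linear_combination (-√dm) * hconj + (2 * dp ^ 2 * √dm * (√dm ^ 2 + dm) - √dm) * ht2
      - dp * √dm * hFt
  rw [← eq_of_two_mul_sq_eq_mul_add_one (by positivity) hquad]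
  linear_combination (-dp ^ 3) * hFt
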